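/- arXiv:1005.5470 — 2 statements merged into one kernel-verified Lean document; each statement's English description precedes it below -/
import Mathlib

section
/- (Main theorem.) For a graph G with magnetic field vector M_i ∈ ℂ^q at each vertex and Hamiltonian h(σ) = −Σ_{{i,j}∈E} J_{i,j} δ(σ_i, σ_j) − Σ_{v_i} Σ_{α=1}^q M_{i,α} δ(α, σ_i), the partition function satisfies Z(G) = V(G, ω; {X_M}_{M∈ℂ^q}, {e^{β J_{i,j}} − 1}_{{i,j}∈E(G)}), where the vertex weights are ω(v_i) = M_i and X_M = Σ_{α=1}^q e^{β M_α} for M = (M_1,…,M_q) ∈ ℂ^q. -/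
open Finset

structure WGraph (S : Type) (L : Type) where
  V : Type
  E : Type
  [fV : Fintype V]
  [dV : DecidableEq V]
  [fE : Fintype E]
  [dE : DecidableEq E]
  ends : E → V × V
  ω : V → S
  γ : E → L

attribute [instance] WGraph.fV WGraph.dV WGraph.fE WGraph.dE

namespace WGraph
variable {S L : Type}

def IsLoop (G : WGraph S L) (e : G.E) : Prop := (G.ends e).1 = (G.ends e).2

def delete (G : WGraph S L) (e₀ : G.E) : WGraph S L where
  V := G.V
  E := {e : G.E // e ≠ e₀}
  ends := fun e => G.ends e.1
  ω := G.ω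
  γ := fun e => G.γ e.1

def contract [Add S] (G : WGraph S L) (e₀ : G.E) (h : ¬ G.IsLoop e₀) : WGraph S L where
  V := {v : G.V // v ≠ (G.ends e₀).2}
  E := {e : G.E // e ≠ e₀}
  ends := fun e =>
    ((if hv : (G.ends e.1).1 = (G.ends e₀).2 then ⟨(G.ends e₀).1, h⟩
        else ⟨(G.ends e.1).1, hv⟩ : {v : G.V // v ≠ (G.ends e₀).2}),
     (if hv : (G.ends e.1).2 = (G.ends e₀).2 then ⟨(G.ends e₀).1, h⟩
        else ⟨(G.ends e.1).2, hv⟩))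
  ω := fun v =>
    if v.1 = (G.ends e₀).1 then G.ω (G.ends e₀).1 + G.ω (G.ends e₀).2 else G.ω v.1
  γ := fun e => G.γ e.1

def mapEdges {L' : Type} (G : WGraph S L) (φ : L → L') : WGraph S L' where
  V := G.V
  E := G.E
  ends := G.ends
  ω := G.ω
  γ := φ ∘ G.γ

def stateGraph (G : WGraph S L) (A : Finset G.E) : SimpleGraph G.V :=
  SimpleGraph.fromRel (fun v w => ∃ e ∈ A, G.ends e = (v, w))

noncomputable instance (G : WGraph S L) (A : Finset G.E) :
    Fintype (G.stateGraph A).ConnectedComponent := Fintype.ofFinite _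

noncomputable def kcomp (G : WGraph S L) (A : Finset G.E) : ℕ :=
  Fintype.card (G.stateGraph A).ConnectedComponent

open scoped Classical in
noncomputable def compWeight [AddCommMonoid S] (G : WGraph S L) (A : Finset G.E)
    (c : (G.stateGraph A).ConnectedComponent) : S :=
  ∑ v ∈ Finset.univ.filter (fun v => (G.stateGraph A).connectedComponentMk v = c), G.ω v

end WGraph

/-- The variable-field q-state Potts Hamiltonian:
`h(σ) = -Σ_{e={i,j}} J_e δ(σ_i,σ_j) - Σ_i Σ_α M_{i,α} δ(α,σ_i)`. -/
noncomputable def pottsH (q : ℕ) (G : WGraph (Fin q → ℂ) ℂ) (σ : G.V → Fin q) : ℂ :=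
  -(∑ e : G.E, G.γ e * (if σ (G.ends e).1 = σ (G.ends e).2 then 1 else 0))
    - ∑ v : G.V, ∑ α : Fin q, G.ω v α * (if α = σ v then 1 else 0)

/-- The variable-field q-state Potts partition function `Z(G) = Σ_σ e^{-β h(σ)}`. -/
noncomputable def pottsZ (q : ℕ) (β : ℂ) (G : WGraph (Fin q → ℂ) ℂ) : ℂ :=
  ∑ σ : G.V → Fin q, Complex.exp (-β * pottsH q G σ)


/-!
Write `e^{-βh(σ)}` as a product of bond factors `e^{βJ_e δ(σ_i, σ_j)}` and field factors
`e^{βM_{i,σ_i}}`. Splitting the bond factor of a non-loop edge `e` as `1 + (e^{βJ_e} - 1) δ` gives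
`Z(G) = Z(G - e) + (e^{βJ_e} - 1) Z(G / e)`: the colorings of `G` that agree on the ends of `e` are
exactly the colorings of `G / e`, and the field factors of the two ends combine into the factor of
the merged vertex, whose field is their sum. A loop only contributes the constant `e^{βJ_e}`, and
without edges `Z` factors over the vertices as `∏ᵢ X_{Mᵢ}`. Hence `Z` obeys the recursion defining
`V` at `γ_e = e^{βJ_e} - 1`, and induction on the number of edges identifies the two.
-/

open Complex

namespace WGraph

variable {S L : Type}

lemma card_delete_edges (G : WGraph S L) (e : G.E) :
    Fintype.card (G.delete e).E = Fintype.card G.E - 1 :=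
  Set.card_ne_eq e

variable [Add S] (G : WGraph S L) (e : G.E) (h : ¬ G.IsLoop e)

def mergedVertex : (G.contract e h).V :=
  ⟨(G.ends e).1, h⟩

def contractVertex (v : G.V) : (G.contract e h).V :=
  if hv : v = (G.ends e).2 then G.mergedVertex e h else ⟨v, hv⟩

lemma contractVertex_val (v : (G.contract e h).V) : G.contractVertex e h v.1 = v :=
  dif_neg v.2

lemma contractVertex_snd : G.contractVertex e h (G.ends e).2 = G.mergedVertex e h :=
  dif_pos rfl

lemma val_contractVertex (v : G.V) :
    (G.contractVertex e h v).1 = if v = (G.ends e).2 then (G.ends e).1 else v := by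
  by_cases hv : v = (G.ends e).2 <;> simp [contractVertex, mergedVertex, hv]

def contractColoringEquiv (α : Type) :
    ((G.contract e h).V → α) ≃ {σ : G.V → α // σ (G.ends e).1 = σ (G.ends e).2} where
  toFun σ := ⟨σ ∘ G.contractVertex e h, by
    simp only [Function.comp, contractVertex_snd]
    exact congrArg σ (G.contractVertex_val e h (G.mergedVertex e h))⟩
  invFun σ := σ.1 ∘ Subtype.val
  left_inv σ := funext fun v => congrArg σ (G.contractVertex_val e h v)
  right_inv σ := Subtype.ext <| funext fun v => by
    simp only [Function.comp, val_contractVertex]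
    split_ifs with hv
    · rw [hv, σ.2]
    · rfl

lemma sum_ite_ends_eq_sum_contract {α M : Type} [Fintype α] [DecidableEq α] [AddCommMonoid M]
    (f : (G.V → α) → M) :
    ∑ σ : G.V → α, (if σ (G.ends e).1 = σ (G.ends e).2 then f σ else 0) =
      ∑ σ : (G.contract e h).V → α, f (σ ∘ G.contractVertex e h) := by
  rw [← sum_filter, sum_subtype (p := fun σ : G.V → α => σ (G.ends e).1 = σ (G.ends e).2) _
    (fun σ => by simp)]
  exact (Fintype.sum_equiv (G.contractColoringEquiv e h α) _ _ fun σ => rfl).symm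

end WGraph

open WGraph

section Weights

variable {q : ℕ} (β : ℂ) (G : WGraph (Fin q → ℂ) ℂ)

noncomputable def pottsBondWeight (σ : G.V → Fin q) : ℂ :=
  ∏ e, if σ (G.ends e).1 = σ (G.ends e).2 then exp (β * G.γ e) else 1

noncomputable def pottsFieldWeight (σ : G.V → Fin q) : ℂ :=
  ∏ v, exp (β * G.ω v (σ v))

lemma exp_neg_mul_pottsH (σ : G.V → Fin q) :
    exp (-β * pottsH q G σ) = pottsBondWeight β G σ * pottsFieldWeight β G σ := by
  have hfield : ∀ v, ∑ α, G.ω v α * (if α = σ v then 1 else 0) = G.ω v (σ v) := fun v => by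
    simp
  have hexp : -β * pottsH q G σ =
      ∑ e, β * (G.γ e * if σ (G.ends e).1 = σ (G.ends e).2 then 1 else 0) +
        ∑ v, β * G.ω v (σ v) := by
    simp only [pottsH, hfield, ← mul_sum]
    ring
  rw [hexp, exp_add, exp_sum, exp_sum, pottsBondWeight, pottsFieldWeight]
  congr 1
  refine prod_congr rfl fun e _ => ?_
  split_ifs <;> simp

lemma pottsZ_eq_sum_weight :
    pottsZ q β G = ∑ σ, pottsBondWeight β G σ * pottsFieldWeight β G σ :=
  sum_congr rfl fun σ _ => exp_neg_mul_pottsH β G σ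

lemma pottsBondWeight_eq_mul_delete (e : G.E) (σ : G.V → Fin q) :
    pottsBondWeight β G σ =
      (if σ (G.ends e).1 = σ (G.ends e).2 then exp (β * G.γ e) else 1) *
        pottsBondWeight β (G.delete e) σ :=
  Fintype.prod_eq_mul_prod_subtype_ne _ e

lemma pottsBondWeight_delete_comp_contractVertex (e : G.E) (h : ¬ G.IsLoop e)
    (σ : (G.contract e h).V → Fin q) :
    pottsBondWeight β (G.delete e) (σ ∘ G.contractVertex e h) =
      pottsBondWeight β (G.contract e h) σ :=
  rfl

lemma pottsFieldWeight_comp_contractVertex (e : G.E) (h : ¬ G.IsLoop e)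
    (σ : (G.contract e h).V → Fin q) :
    pottsFieldWeight β G (σ ∘ G.contractVertex e h) = pottsFieldWeight β (G.contract e h) σ := by
  calc pottsFieldWeight β G (σ ∘ G.contractVertex e h)
      = exp (β * G.ω (G.ends e).2 (σ (G.mergedVertex e h))) *
          ∏ v : (G.contract e h).V, exp (β * G.ω v.1 (σ v)) := by
        rw [pottsFieldWeight, Fintype.prod_eq_mul_prod_subtype_ne _ (G.ends e).2,
          Function.comp_apply, contractVertex_snd]
        congr 1
        exact prod_congr rfl fun (v : (G.contract e h).V) _ => by
          rw [Function.comp_apply, G.contractVertex_val e h v]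
    _ = ∏ v : (G.contract e h).V, exp (β * G.ω v.1 (σ v)) *
          if v = G.mergedVertex e h then exp (β * G.ω (G.ends e).2 (σ v)) else 1 := by
        rw [prod_mul_distrib, Fintype.prod_ite_eq', mul_comm]
    _ = pottsFieldWeight β (G.contract e h) σ := prod_congr rfl fun v _ => by
        by_cases hv : v = G.mergedVertex e h
        · subst hv
          simp [contract, mergedVertex, mul_add, exp_add]
        · have hv' : v.1 ≠ (G.ends e).1 := fun h' => hv (Subtype.ext h')
          rw [if_neg hv, mul_one]
          simp [contract, hv']

end Weights

section Recurrences

variable {q : ℕ} (β : ℂ) (G : WGraph (Fin q → ℂ) ℂ)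

lemma pottsZ_of_isEmpty [IsEmpty G.E] :
    pottsZ q β G = ∏ v, ∑ α, exp (β * G.ω v α) := by
  simp [pottsZ_eq_sum_weight, pottsBondWeight, pottsFieldWeight, prod_univ_sum]

lemma pottsZ_of_isLoop (e : G.E) (h : G.IsLoop e) :
    pottsZ q β G = exp (β * G.γ e) * pottsZ q β (G.delete e) := by
  simp only [pottsZ_eq_sum_weight, pottsBondWeight_eq_mul_delete β G e, mul_sum]
  refine sum_congr rfl fun σ _ => ?_
  rw [if_pos (congrArg σ h), mul_assoc]
  rfl

lemma pottsZ_of_not_isLoop (e : G.E) (h : ¬ G.IsLoop e) :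
    pottsZ q β G =
      pottsZ q β (G.delete e) + (exp (β * G.γ e) - 1) * pottsZ q β (G.contract e h) := by
  set F : (G.V → Fin q) → ℂ := fun σ => pottsBondWeight β (G.delete e) σ * pottsFieldWeight β G σ
  have hsplit : ∀ σ : G.V → Fin q, pottsBondWeight β G σ * pottsFieldWeight β G σ =
      F σ + (exp (β * G.γ e) - 1) * if σ (G.ends e).1 = σ (G.ends e).2 then F σ else 0 := by
    intro σ
    rw [pottsBondWeight_eq_mul_delete β G e]
    split_ifs <;> ring
  have hcontract : ∀ σ : (G.contract e h).V → Fin q, F (σ ∘ G.contractVertex e h) =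
      pottsBondWeight β (G.contract e h) σ * pottsFieldWeight β (G.contract e h) σ := fun σ =>
    congr_arg₂ (· * ·) (pottsBondWeight_delete_comp_contractVertex β G e h σ)
      (pottsFieldWeight_comp_contractVertex β G e h σ)
  rw [pottsZ_eq_sum_weight β G, pottsZ_eq_sum_weight β (G.delete e),
    pottsZ_eq_sum_weight β (G.contract e h)]
  simp only [hsplit, sum_add_distrib, ← mul_sum, sum_ite_ends_eq_sum_contract G e h F, hcontract]
  rfl

end Recurrences

/-- main theorem: the variable-field Potts partition function is the evaluation
of the V-polynomial with vertex weights `ω(v_i) = M_i ∈ ℂ^q`, variables `x_M = X_M = Σ_α e^{βM_α}`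
and edge weights `γ_e = e^{βJ_e} - 1`. -/
theorem pottsZ_eq_V (q : ℕ) (β : ℂ) (Vpoly : WGraph (Fin q → ℂ) ℂ → ℂ)
    (hV1 : ∀ (G : WGraph (Fin q → ℂ) ℂ) (e : G.E) (h : ¬ G.IsLoop e),
      Vpoly G = Vpoly (G.delete e) + G.γ e * Vpoly (G.contract e h))
    (hV2 : ∀ (G : WGraph (Fin q → ℂ) ℂ) (e : G.E), G.IsLoop e →
      Vpoly G = (G.γ e + 1) * Vpoly (G.delete e))
    (hV3 : ∀ G : WGraph (Fin q → ℂ) ℂ, IsEmpty G.E →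
      Vpoly G = ∏ v : G.V, ∑ α : Fin q, Complex.exp (β * G.ω v α)) :
    ∀ G : WGraph (Fin q → ℂ) ℂ,
      pottsZ q β G = Vpoly (G.mapEdges (fun J => Complex.exp (β * J) - 1)) := by
  intro G
  induction hn : Fintype.card G.E generalizing G with
  | zero =>
    have hE := Fintype.card_eq_zero_iff.mp hn
    rw [pottsZ_of_isEmpty, hV3 (G.mapEdges _) hE]
    rfl
  | succ n ih =>
    obtain ⟨e⟩ := Fintype.card_pos_iff.mp (hn.trans_gt n.succ_pos)
    have hdel : Fintype.card (G.delete e).E = n := by rw [card_delete_edges, hn, n.add_sub_cancel]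
    by_cases hl : G.IsLoop e
    · rw [pottsZ_of_isLoop β G e hl, hV2 (G.mapEdges _) e hl, ih _ hdel]
      congr 1
      exact (sub_add_cancel _ 1).symm
    · rw [pottsZ_of_not_isLoop β G e hl, hV1 (G.mapEdges _) e hl, ih _ hdel,
        ih (G.contract e hl) hdel]
      rfl
end

section
/- (Fortuin–Kasteleyn-type representation.) For a graph G with magnetic field vector M_i ∈ ℂ^q at each vertex and variable-field Potts Hamiltonian, Z(G) = Σ_{A ⊆ E(G)} X_{M_{C_1}} ⋯ X_{M_{C_{k(A)}}} · ∏_{e∈A} (e^{β J_e} − 1), where M_{C_l} is the sum of the vectors M_i over vertices in the l-th connected component of the spanning subgraph (V(G), A), and X_M = Σ_{α=1}^q e^{β M_α}. -/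
/-!
Write `δ_e(σ)` for the indicator that the ends of `e` get the same colour. Each edge factor
`e^{β J_e δ_e} = 1 + (e^{β J_e} - 1) δ_e` is expanded and the product over the edges multiplied
out, which turns `Z` into a sum over edge sets `A`. For fixed `A`, the product of the `δ_e` with
`e ∈ A` is the indicator that `σ` is constant on every component of `(V, A)`; such colourings are
exactly the maps from the set of components to the colours, so the remaining sum of
`∏_v e^{β M_{v,σ_v}}` factors into one colour sum per component, in which the fields of the
vertices of that component add up to `M_C`.
-/

open Finset

namespace SimpleGraph

variable {V α : Type*} {H : SimpleGraph V}

theorem Reachable.apply_eq_of_forall_adj {f : V → α} (hf : ∀ u v, H.Adj u v → f u = f v)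
    {u v : V} (h : H.Reachable u v) : f u = f v := by
  rw [reachable_iff_reflTransGen] at h
  induction h with
  | refl => rfl
  | tail _ hadj ih => exact ih.trans (hf _ _ hadj)

theorem exists_comp_connectedComponentMk_eq_iff {σ : V → α} :
    (∃ τ : H.ConnectedComponent → α, τ ∘ H.connectedComponentMk = σ) ↔
      ∀ u v, H.Adj u v → σ u = σ v := by
  constructor
  · rintro ⟨τ, rfl⟩ u v huv
    exact congrArg τ (ConnectedComponent.connectedComponentMk_eq_of_adj huv)
  · intro hσ
    exact ⟨Quot.lift σ fun u v huv => huv.apply_eq_of_forall_adj hσ, rfl⟩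

theorem sum_filter_forall_adj_eq {M : Type*} [Fintype V] [DecidableEq V] [Fintype α]
    [Fintype H.ConnectedComponent] [DecidableEq H.ConnectedComponent]
    [DecidablePred fun σ : V → α => ∀ u v, H.Adj u v → σ u = σ v] [AddCommMonoid M]
    (g : (V → α) → M) :
    ∑ σ ∈ univ.filter fun σ : V → α => ∀ u v, H.Adj u v → σ u = σ v, g σ =
      ∑ τ : H.ConnectedComponent → α, g (τ ∘ H.connectedComponentMk) := by
  classical
  have himage : (univ.filter fun σ : V → α => ∀ u v, H.Adj u v → σ u = σ v) =
      univ.image (· ∘ H.connectedComponentMk) := by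
    ext σ
    simp [exists_comp_connectedComponentMk_eq_iff]
  have hinj : Function.Injective fun τ : H.ConnectedComponent → α =>
      τ ∘ H.connectedComponentMk :=
    Quot.mk_surjective.injective_comp_right
  rw [himage, sum_image fun τ _ τ' _ h => hinj h]

theorem sum_filter_forall_adj_prod_eq_prod_sum {R : Type*} [Fintype V] [DecidableEq V]
    [Fintype α] [Fintype H.ConnectedComponent] [DecidableEq H.ConnectedComponent]
    [DecidablePred fun σ : V → α => ∀ u v, H.Adj u v → σ u = σ v] [CommSemiring R]
    (f : V → α → R) :
    ∑ σ ∈ univ.filter fun σ : V → α => ∀ u v, H.Adj u v → σ u = σ v,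
        ∏ v, f v (σ v) =
      ∏ c : H.ConnectedComponent, ∑ a, ∏ v with H.connectedComponentMk v = c, f v a := by
  rw [sum_filter_forall_adj_eq, Fintype.prod_sum]
  refine sum_congr rfl fun τ _ => ?_
  rw [← prod_fiberwise univ H.connectedComponentMk]
  refine prod_congr rfl fun c _ => prod_congr rfl fun v hv => ?_
  rw [Function.comp_apply, (mem_filter.1 hv).2]

end SimpleGraph

theorem Complex.exp_mul_boole (x : ℂ) (p : Prop) [Decidable p] :
    Complex.exp (x * if p then 1 else 0) =
      (Complex.exp x - 1) * (if p then 1 else 0) + 1 := by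
  split_ifs <;> simp

namespace WGraph

theorem forall_mem_ends_eq_iff {S L : Type} {α : Type*} (G : WGraph S L) (A : Finset G.E)
    (σ : G.V → α) :
    (∀ e ∈ A, σ (G.ends e).1 = σ (G.ends e).2) ↔
      ∀ u v, (G.stateGraph A).Adj u v → σ u = σ v := by
  simp only [stateGraph, SimpleGraph.fromRel_adj]
  constructor
  · rintro hσ u v ⟨-, ⟨e, he, hends⟩ | ⟨e, he, hends⟩⟩
    · simpa [hends] using hσ e he
    · simpa [hends] using (hσ e he).symm
  · intro hσ e he
    by_cases hloop : (G.ends e).1 = (G.ends e).2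
    · rw [hloop]
    · exact hσ _ _ ⟨hloop, Or.inl ⟨e, he, rfl⟩⟩

theorem sum_filter_forall_mem_ends_eq_prod_exp {α L : Type} [Fintype α] [DecidableEq α]
    (G : WGraph (α → ℂ) L) (A : Finset G.E) (β : ℂ) :
    ∑ σ : G.V → α with ∀ e ∈ A, σ (G.ends e).1 = σ (G.ends e).2,
        ∏ v, Complex.exp (β * G.ω v (σ v)) =
      ∏ c, ∑ a, Complex.exp (β * G.compWeight A c a) := by
  classical
  calc _ = ∑ σ : G.V → α with ∀ u v, (G.stateGraph A).Adj u v → σ u = σ v,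
          ∏ v, Complex.exp (β * G.ω v (σ v)) :=
        sum_congr (by ext σ; simp [G.forall_mem_ends_eq_iff A σ]) fun _ _ => rfl
    _ = _ := SimpleGraph.sum_filter_forall_adj_prod_eq_prod_sum
        fun v a => Complex.exp (β * G.ω v a)
    _ = _ := by
      refine prod_congr rfl fun c _ => sum_congr rfl fun a _ => ?_
      rw [compWeight, Finset.sum_apply, mul_sum, Complex.exp_sum]

end WGraph

theorem pottsH_eq (q : ℕ) (G : WGraph (Fin q → ℂ) ℂ) (σ : G.V → Fin q) :
    pottsH q G σ = -(∑ e, G.γ e * (if σ (G.ends e).1 = σ (G.ends e).2 then 1 else 0))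
      - ∑ v, G.ω v (σ v) := by
  simp only [pottsH, mul_ite, mul_one, mul_zero, sum_ite_eq', mem_univ, if_true]

theorem exp_neg_mul_pottsH_eq_sum (q : ℕ) (β : ℂ) (G : WGraph (Fin q → ℂ) ℂ)
    (σ : G.V → Fin q) :
    Complex.exp (-β * pottsH q G σ) =
      ∑ A : Finset G.E, (∏ e ∈ A, (Complex.exp (β * G.γ e) - 1) *
        (if σ (G.ends e).1 = σ (G.ends e).2 then 1 else 0)) *
        ∏ v, Complex.exp (β * G.ω v (σ v)) := by
  have hsplit : -β * pottsH q G σ =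
      ∑ e, β * G.γ e * (if σ (G.ends e).1 = σ (G.ends e).2 then 1 else 0) +
        ∑ v, β * G.ω v (σ v) := by
    simp only [pottsH_eq, mul_assoc, ← mul_sum]
    ring
  simp_rw [hsplit, Complex.exp_add, Complex.exp_sum, Complex.exp_mul_boole]
  rw [prod_add_one, powerset_univ, sum_mul]

/-- Fortuin–Kasteleyn-type representation:
`Z(G) = Σ_{A⊆E} X_{M_{C_1}} ⋯ X_{M_{C_{k(A)}}} Π_{e∈A}(e^{βJ_e}-1)`, where `M_{C_l}` is the sum
of the magnetic weight vectors over the l-th component of `(V(G),A)` and `X_M = Σ_α e^{βM_α}`. -/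
theorem pottsZ_FK (q : ℕ) (β : ℂ) (G : WGraph (Fin q → ℂ) ℂ) :
    pottsZ q β G =
      ∑ A : Finset G.E,
        (∏ c : (G.stateGraph A).ConnectedComponent,
          ∑ α : Fin q, Complex.exp (β * (G.compWeight A c) α)) *
        ∏ e ∈ A, (Complex.exp (β * G.γ e) - 1) := by
  simp only [pottsZ, exp_neg_mul_pottsH_eq_sum]
  rw [sum_comm]
  refine sum_congr rfl fun A _ => ?_
  simp_rw [prod_mul_distrib, prod_boole, mul_assoc, ← mul_sum, ite_mul, one_mul, zero_mul,
    ← sum_filter, WGraph.sum_filter_forall_mem_ends_eq_prod_exp]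
  exact mul_comm _ _
end
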